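/- Let A and B be at most countable ω-categorical relational structures. Then B can be pp-constructed from A if and only if B is homomorphically equivalent to a pp-power of A. -/

import Mathlib

/-! ### Relational structures, pp-formulas, pp-powers -/

/-- A relational structure with signature `σ` (arities given by `ar`) on domain `D`. -/
structure RelStruct (σ : Type) (ar : σ → ℕ) (D : Type) where
  rel : ∀ s : σ, (Fin (ar s) → D) → Prop

section Rel

variable {σ : Type} {ar : σ → ℕ} {τ : Type} {br : τ → ℕ} {D E : Type}

/-- `h` is a homomorphism between two relational structures in the same signature. -/
def IsHomOf (SA : RelStruct σ ar D) (SB : RelStruct σ ar E) (h : D → E) : Prop :=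
  ∀ s t, SA.rel s t → SB.rel s (fun i => h (t i))

/-- Homomorphic equivalence of relational structures in the same signature. -/
def HomEquiv (SA : RelStruct σ ar D) (SB : RelStruct σ ar E) : Prop :=
  (∃ h, IsHomOf SA SB h) ∧ (∃ h, IsHomOf SB SA h)

/-- An automorphism of a relational structure. -/
def IsAutomorphism (S : RelStruct σ ar D) (g : D ≃ D) : Prop :=
  IsHomOf S S g ∧ IsHomOf S S g.symm

/-- ω-categoricity (for at most countable structures): for every `n` the componentwise
action of the automorphism group on `n`-tuples has finitely many orbits. -/
def OmegaCategorical (S : RelStruct σ ar D) : Prop :=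
  ∀ n : ℕ, Set.Finite { O : Set (Fin n → D) | ∃ t : Fin n → D,
    O = { u | ∃ g : D ≃ D, IsAutomorphism S g ∧ (fun i => g (t i)) = u } }

/-- A model-complete core: automorphisms are dense in endomorphisms. -/
def ModelCompleteCore (S : RelStruct σ ar D) : Prop :=
  ∀ e : D → D, IsHomOf S S e → ∀ F : Set D, F.Finite →
    ∃ g : D ≃ D, IsAutomorphism S g ∧ ∀ x ∈ F, g x = e x

/-- Primitive positive formulas over signature `(σ, ar)` with free variables of type `V`. -/
inductive PPFormula (σ : Type) (ar : σ → ℕ) : Type → Type 1 where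
  | rel {V : Type} (s : σ) (t : Fin (ar s) → V) : PPFormula σ ar V
  | eq {V : Type} (x y : V) : PPFormula σ ar V
  | and {V : Type} (φ ψ : PPFormula σ ar V) : PPFormula σ ar V
  | ex {V : Type} (φ : PPFormula σ ar (Option V)) : PPFormula σ ar V

/-- Satisfaction of a pp-formula under an assignment of the free variables. -/
def PPFormula.Sat (S : RelStruct σ ar D) : {V : Type} → PPFormula σ ar V → (V → D) → Prop
  | _, .rel s t, v => S.rel s (fun i => v (t i))
  | _, .eq x y, v => v x = v y
  | _, .and φ ψ, v => PPFormula.Sat S φ v ∧ PPFormula.Sat S ψ v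
  | _, .ex φ, v => ∃ d : D, PPFormula.Sat S φ (fun o => Option.elim o d v)

/-- A relation (with coordinates indexed by `V`) is pp-definable in `S`. -/
def PpDefinable (S : RelStruct σ ar D) {V : Type} (R : (V → D) → Prop) : Prop :=
  ∃ φ : PPFormula σ ar V, ∀ v, R v ↔ PPFormula.Sat S φ v

/-- `SB` is a pp-power of `SA`: `SB` is isomorphic to a structure with domain `D^n`
(`n ≥ 1`) whose relations, regarded as relations on `D` of `n`-fold arity,
are pp-definable in `SA`. -/
def IsPpPower (SA : RelStruct σ ar D) (SB : RelStruct τ br E) : Prop :=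
  ∃ n : ℕ, 0 < n ∧ ∃ e : E ≃ (Fin n → D),
    ∀ s : τ, PpDefinable SA (fun v : Fin (br s) × Fin n → D =>
      SB.rel s (fun j => e.symm (fun i => v (j, i))))

/-- `SB` is homomorphically equivalent to a pp-power of `SA`. -/
def HomEqPpPower (SA : RelStruct σ ar D) (SB : RelStruct τ br E) : Prop :=
  ∃ (C : Type) (SC : RelStruct τ br C), IsPpPower SA SC ∧ HomEquiv SB SC

end Rel

/-! ### Function clones (all operations have arity ≥ 1; arity index `n` means arity `n+1`) -/

/-- A set of finitary operations on `A`, where `C n` collects the `(n+1)`-ary members. -/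
def OpSet (A : Type) := ∀ n : ℕ, Set ((Fin (n+1) → A) → A)

section Clone

variable {A B : Type}

/-- A function clone: contains all projections and is closed under composition. -/
structure IsClone (C : OpSet A) : Prop where
  proj : ∀ (n : ℕ) (i : Fin (n+1)), (fun t => t i) ∈ C n
  comp : ∀ (n m : ℕ) (f : (Fin (n+1) → A) → A) (g : Fin (n+1) → ((Fin (m+1) → A) → A)),
    f ∈ C n → (∀ i, g i ∈ C m) → (fun t => f (fun i => g i t)) ∈ C m

/-- An arity-preserving assignment of operations on `B` to operations on `A`. -/
def CloneMap (A B : Type) := ∀ n : ℕ, ((Fin (n+1) → A) → A) → ((Fin (n+1) → B) → B)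

/-- `ξ` maps the members of `CA` to members of `CB`. -/
def MapsCloneInto (CA : OpSet A) (CB : OpSet B) (ξ : CloneMap A B) : Prop :=
  ∀ n f, f ∈ CA n → ξ n f ∈ CB n

/-- `ξ` preserves identities of height 1: it preserves taking minors (compositions
with projections). -/
def PreservesH1 (CA : OpSet A) (ξ : CloneMap A B) : Prop :=
  ∀ (n m : ℕ) (f : (Fin (n+1) → A) → A), f ∈ CA n → ∀ p : Fin (n+1) → Fin (m+1),
    ξ m (fun t => f (fun i => t (p i))) = fun t => ξ n f (fun i => t (p i))

/-- An h1 clone homomorphism from `CA` to `CB`. -/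
def IsH1Hom (CA : OpSet A) (CB : OpSet B) (ξ : CloneMap A B) : Prop :=
  MapsCloneInto CA CB ξ ∧ PreservesH1 CA ξ

/-- `ξ` sends every projection to the same projection. -/
def PreservesProj (ξ : CloneMap A B) : Prop :=
  ∀ (n : ℕ) (i : Fin (n+1)), ξ n (fun t => t i) = fun t => t i

/-- A strong h1 clone homomorphism: an h1 clone homomorphism preserving projections. -/
def IsStrongH1Hom (CA : OpSet A) (CB : OpSet B) (ξ : CloneMap A B) : Prop :=
  IsH1Hom CA CB ξ ∧ PreservesProj ξ

/-- A clone homomorphism: preserves projections and composition. -/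
def IsCloneHom (CA : OpSet A) (CB : OpSet B) (ξ : CloneMap A B) : Prop :=
  MapsCloneInto CA CB ξ ∧ PreservesProj ξ ∧
    ∀ (n m : ℕ) (f : (Fin (n+1) → A) → A) (g : Fin (n+1) → ((Fin (m+1) → A) → A)),
      f ∈ CA n → (∀ i, g i ∈ CA m) →
      ξ m (fun t => f (fun i => g i t)) = fun t => ξ n f (fun i => ξ m (g i) t)

/-- Uniform continuity of a map between function clones. -/
def UniformlyCont (CA : OpSet A) (ξ : CloneMap A B) : Prop :=
  ∀ Bf : Set B, Bf.Finite → ∃ Af : Set A, Af.Finite ∧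
    ∀ (n : ℕ) (f g : (Fin (n+1) → A) → A), f ∈ CA n → g ∈ CA n →
      (∀ t : Fin (n+1) → A, (∀ i, t i ∈ Af) → f t = g t) →
      ∀ u : Fin (n+1) → B, (∀ i, u i ∈ Bf) → ξ n f u = ξ n g u

/-- Continuity of a map between function clones (pointwise convergence topology). -/
def ContinuousCloneMap (CA : OpSet A) (ξ : CloneMap A B) : Prop :=
  ∀ (n : ℕ) (f : (Fin (n+1) → A) → A), f ∈ CA n → ∀ Bf : Set B, Bf.Finite →
    ∃ Af : Set A, Af.Finite ∧
      ∀ g, g ∈ CA n → (∀ t : Fin (n+1) → A, (∀ i, t i ∈ Af) → f t = g t) →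
        ∀ u : Fin (n+1) → B, (∀ i, u i ∈ Bf) → ξ n f u = ξ n g u

/-- `CB ∈ E Tra 𝒜`: some reflection of `CA` is contained in `CB`. -/
def InETra (CA : OpSet A) (CB : OpSet B) : Prop :=
  ∃ (h1 : B → A) (h2 : A → B), ∀ n f, f ∈ CA n →
    (fun t : Fin (n+1) → B => h2 (f (fun i => h1 (t i)))) ∈ CB n

/-- `CB ∈ E Tra Pfin 𝒜`: some reflection of a finite power of `CA` is contained in `CB`. -/
def InETraPfin (CA : OpSet A) (CB : OpSet B) : Prop :=
  ∃ (m : ℕ) (h1 : B → (Fin m → A)) (h2 : (Fin m → A) → B),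
    ∀ n f, f ∈ CA n →
      (fun u : Fin (n+1) → B => h2 (fun j => f (fun i => h1 (u i) j))) ∈ CB n

/-- `CB ∈ E Tra P 𝒜`: some reflection of a power of `CA` is contained in `CB`. -/
def InETraP (CA : OpSet A) (CB : OpSet B) : Prop :=
  ∃ (I : Type) (h1 : B → (I → A)) (h2 : (I → A) → B),
    ∀ n f, f ∈ CA n →
      (fun u : Fin (n+1) → B => h2 (fun j => f (fun i => h1 (u i) j))) ∈ CB n

/-- `CB ∈ E Ret Pfin 𝒜`. -/
def InERetPfin (CA : OpSet A) (CB : OpSet B) : Prop :=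
  ∃ (m : ℕ) (h1 : B → (Fin m → A)) (h2 : (Fin m → A) → B),
    (∀ b, h2 (h1 b) = b) ∧
    ∀ n f, f ∈ CA n →
      (fun u : Fin (n+1) → B => h2 (fun j => f (fun i => h1 (u i) j))) ∈ CB n

/-- `CB ∈ E Ret P 𝒜`. -/
def InERetP (CA : OpSet A) (CB : OpSet B) : Prop :=
  ∃ (I : Type) (h1 : B → (I → A)) (h2 : (I → A) → B),
    (∀ b, h2 (h1 b) = b) ∧
    ∀ n f, f ∈ CA n →
      (fun u : Fin (n+1) → B => h2 (fun j => f (fun i => h1 (u i) j))) ∈ CB n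

/-- `CB ∈ E H S Pfin 𝒜`: `CB` contains the clone obtained from some finite power of `CA`
by restricting to an invariant subset and taking the quotient action along a surjection. -/
def InEHSPfin (CA : OpSet A) (CB : OpSet B) : Prop :=
  ∃ (m : ℕ) (S : Set (Fin m → A)) (h : (Fin m → A) → B),
    (∀ (n : ℕ) (f : (Fin (n+1) → A) → A), f ∈ CA n →
      ∀ t : Fin (n+1) → (Fin m → A), (∀ i, t i ∈ S) → (fun j => f (fun i => t i j)) ∈ S) ∧
    (∀ b : B, ∃ x ∈ S, h x = b) ∧
    (∀ (n : ℕ) (f : (Fin (n+1) → A) → A), f ∈ CA n → ∃ f' ∈ CB n,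
      ∀ t : Fin (n+1) → (Fin m → A), (∀ i, t i ∈ S) →
        h (fun j => f (fun i => t i j)) = f' (fun i => h (t i)))

end Clone

section Pol

variable {σ : Type} {ar : σ → ℕ} {D : Type}

/-- The polymorphism clone of a relational structure. -/
def Pol (S : RelStruct σ ar D) : OpSet D :=
  fun n => { f | ∀ (s : σ) (ts : Fin (n+1) → (Fin (ar s) → D)),
    (∀ i, S.rel s (ts i)) → S.rel s (fun j => f (fun i => ts i j)) }

end Pol

/-! ### pp-interpretations and bundled relational structures -/

section PpInt

variable {σ : Type} {ar : σ → ℕ} {τ : Type} {br : τ → ℕ} {D E : Type}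

/-- `SA` pp-interprets `SB`: there are `n ≥ 1` and a surjective partial map
`h : D^n → E` whose domain, the preimage of equality, and the preimages of all
relations of `SB` are pp-definable in `SA`. -/
def PpInterprets (SA : RelStruct σ ar D) (SB : RelStruct τ br E) : Prop :=
  ∃ n : ℕ, 0 < n ∧ ∃ (Dom : Set (Fin n → D)) (h : (Fin n → D) → E),
    (∀ b : E, ∃ x ∈ Dom, h x = b) ∧
    PpDefinable SA (fun v : Fin n → D => v ∈ Dom) ∧
    PpDefinable SA (fun v : Fin 2 × Fin n → D =>
      (fun i => v (0, i)) ∈ Dom ∧ (fun i => v (1, i)) ∈ Dom ∧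
        h (fun i => v (0, i)) = h (fun i => v (1, i))) ∧
    ∀ s : τ, PpDefinable SA (fun v : Fin (br s) × Fin n → D =>
      (∀ j, (fun i => v (j, i)) ∈ Dom) ∧ SB.rel s (fun j => h (fun i => v (j, i))))

end PpInt

/-- A bundled relational structure (signature and domain included). -/
structure BStr : Type 1 where
  ι : Type
  ar : ι → ℕ
  D : Type
  str : RelStruct ι ar D

namespace BStr

/-- A homomorphism between bundled structures, along a renaming `e` of the signature
(preserving arities, witnessed by `har`). -/
def HomVia (A B : BStr) (e : A.ι → B.ι) (har : ∀ s, B.ar (e s) = A.ar s)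
    (h : A.D → B.D) : Prop :=
  ∀ s t, A.str.rel s t → B.str.rel (e s) (fun i => h (t (Fin.cast (har s) i)))

/-- Homomorphic equivalence of bundled structures (up to renaming of the signature). -/
def HomEquivB (A B : BStr) : Prop :=
  ∃ (e : A.ι ≃ B.ι) (har : ∀ s, B.ar (e s) = A.ar s)
    (har' : ∀ s, A.ar (e.symm s) = B.ar s),
    (∃ h, HomVia A B e har h) ∧ (∃ h, HomVia B A e.symm har' h)

/-- `HomEq K`: structures homomorphically equivalent to a member of `K`. -/
def HomEq (K : Set BStr) : Set BStr := { B | ∃ A ∈ K, HomEquivB A B }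

/-- `PpPower K`: pp-powers of members of `K`. -/
def PpPower (K : Set BStr) : Set BStr := { B | ∃ A ∈ K, IsPpPower A.str B.str }

/-- `PpInt K`: structures pp-interpretable in some member of `K`. -/
def PpInt (K : Set BStr) : Set BStr := { B | ∃ A ∈ K, PpInterprets A.str B.str }

end BStr

namespace BStr

/-- `B` is obtained from `A` by adding a singleton unary relation (up to renaming of
the signature and of the domain): the signature of `B` is that of `A` together with
one new unary symbol, the old symbols denote the same relations, and the new symbol
denotes a singleton `{s₀}`. -/
def AddSingletonB (A B : BStr) : Prop :=
  ∃ (e : Option A.ι ≃ B.ι) (d : A.D ≃ B.D)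
    (hars : ∀ s : A.ι, B.ar (e (some s)) = A.ar s) (_ : B.ar (e none) = 1),
    (∀ (s : A.ι) (t : Fin (B.ar (e (some s))) → B.D),
      B.str.rel (e (some s)) t ↔
        A.str.rel s (fun i => d.symm (t (Fin.cast (hars s).symm i)))) ∧
    ∃ s₀ : B.D, ∀ t : Fin (B.ar (e none)) → B.D, B.str.rel (e none) t ↔ ∀ j, t j = s₀

/-- A single step in a pp-construction. -/
def PpStep (A B : BStr) : Prop :=
  PpInterprets A.str B.str ∨ HomEquivB A B ∨
    (Countable A.D ∧ OmegaCategorical A.str ∧ ModelCompleteCore A.str ∧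
      AddSingletonB A B)

/-- `B` can be pp-constructed from `A`: there is a finite sequence of structures from
`A` to `B` each step of which is a pp-interpretation, a homomorphic equivalence, or
the addition of a singleton unary relation to an at most countable ω-categorical
model-complete core. -/
def PpConstructible (A B : BStr) : Prop :=
  ∃ (k : ℕ) (Cs : Fin (k+1) → BStr), Cs 0 = A ∧ Cs (Fin.last k) = B ∧
    ∀ i : Fin k, PpStep (Cs i.castSucc) (Cs i.succ)

end BStr

/-! Every kind of pp-construction step keeps a structure homomorphically equivalent to a pp-power
of `A`, and this relation is transitive: pp-definitions in a pp-power pull back to the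
coordinates, so pp-powers of pp-powers are pp-powers, and the formulas defining a pp-power of
`B` define a homomorphically equivalent pp-power of any structure homomorphically equivalent
to `B`. The only step with content is adding a constant `a` to a countable ω-categorical
model-complete core. There finitely many orbits make every pp-type isolated by one formula, so
inclusion of pp-types of tuples is realised by an endomorphism, built point by point along an
enumeration, hence by an automorphism; thus the orbit of `a` is pp-definable, and a pp-power on
pairs simulates the constant. Conversely, a pp-power is a pp-interpretation, so two steps
suffice. -/

section PPFormulaCalculus

variable {σ : Type} {ar : σ → ℕ} {D E : Type}

namespace PPFormula

def rename : {V W : Type} → (V → W) → PPFormula σ ar V → PPFormula σ ar W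
  | _, _, f, .rel s t => .rel s (f ∘ t)
  | _, _, f, .eq x y => .eq (f x) (f y)
  | _, _, f, .and φ ψ => .and (rename f φ) (rename f ψ)
  | _, _, f, .ex φ => .ex (rename (Option.map f) φ)

theorem sat_rename (S : RelStruct σ ar D) :
    ∀ {V W : Type} (f : V → W) (φ : PPFormula σ ar V) (v : W → D),
      (φ.rename f).Sat S v ↔ φ.Sat S (v ∘ f)
  | _, _, _, .rel _ _, _ => Iff.rfl
  | _, _, _, .eq _ _, _ => Iff.rfl
  | _, _, f, .and φ ψ, v => and_congr (sat_rename S f φ v) (sat_rename S f ψ v)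
  | _, _, f, .ex φ, v => exists_congr fun d => by
      rw [sat_rename S (Option.map f) φ]
      exact iff_of_eq (congrArg _ (funext fun o => by cases o <;> rfl))

theorem Sat.map_hom {SA : RelStruct σ ar D} {SB : RelStruct σ ar E} {h : D → E}
    (hh : IsHomOf SA SB h) :
    ∀ {V : Type} (φ : PPFormula σ ar V) {v : V → D}, φ.Sat SA v → φ.Sat SB (h ∘ v)
  | _, .rel s _, _, hv => hh s _ hv
  | _, .eq _ _, _, hv => congrArg h hv
  | _, .and φ ψ, _, hv => ⟨map_hom hh φ hv.1, map_hom hh ψ hv.2⟩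
  | _, .ex φ, v, hv => by
      obtain ⟨d, hd⟩ := hv
      have hcomp : h ∘ (fun o => Option.elim o d v) = fun o => Option.elim o (h d) (h ∘ v) :=
        funext fun o => by cases o <;> rfl
      exact ⟨h d, hcomp ▸ map_hom hh φ hd⟩

end PPFormula

namespace PpDefinable

variable {S : RelStruct σ ar D} {V W : Type}

theorem congr {R R' : (V → D) → Prop} (h : PpDefinable S R) (hR : ∀ v, R' v ↔ R v) :
    PpDefinable S R' :=
  let ⟨φ, hφ⟩ := h
  ⟨φ, fun v => (hR v).trans (hφ v)⟩

theorem rel (s : σ) (t : Fin (ar s) → V) : PpDefinable S (fun v => S.rel s (v ∘ t)) :=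
  ⟨.rel s t, fun _ => Iff.rfl⟩

theorem eq (x y : V) : PpDefinable S (fun v => v x = v y) :=
  ⟨.eq x y, fun _ => Iff.rfl⟩

theorem and {R R' : (V → D) → Prop} (h : PpDefinable S R) (h' : PpDefinable S R') :
    PpDefinable S (fun v => R v ∧ R' v) :=
  let ⟨φ, hφ⟩ := h
  let ⟨ψ, hψ⟩ := h'
  ⟨.and φ ψ, fun v => and_congr (hφ v) (hψ v)⟩

theorem comap {R : (V → D) → Prop} (h : PpDefinable S R) (f : V → W) :
    PpDefinable S (fun w => R (w ∘ f)) :=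
  let ⟨φ, hφ⟩ := h
  ⟨φ.rename f, fun w => (hφ _).trans (PPFormula.sat_rename S f φ w).symm⟩

theorem exists_option {R : (Option V → D) → Prop} (h : PpDefinable S R) :
    PpDefinable S (fun v => ∃ d, R (fun o => o.elim d v)) :=
  let ⟨φ, hφ⟩ := h
  ⟨.ex φ, fun _ => exists_congr fun _ => hφ _⟩

theorem exists_fin (n : ℕ) :
    ∀ {V : Type} {R : (V ⊕ Fin n → D) → Prop}, PpDefinable S R →
      PpDefinable S (fun v => ∃ w : Fin n → D, R (Sum.elim v w)) := by
  induction n with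
  | zero =>
    intro V R (h : PpDefinable S R)
    refine (h.comap (Sum.elim id Fin.elim0)).congr fun v => ?_
    rw [Unique.exists_iff]
    exact iff_of_eq <| congrArg R <| funext fun x => by rcases x with x | i; rfl; exact i.elim0
  | succ n ih =>
    intro V R (h : PpDefinable S R)
    let g : V ⊕ Fin (n + 1) → Option (V ⊕ Fin n) :=
      Sum.elim (some ∘ Sum.inl) (Fin.cases none (some ∘ Sum.inr))
    have hg : ∀ (u : V ⊕ Fin n → D) d, (fun o => Option.elim o d u) ∘ g =
        Sum.elim (u ∘ Sum.inl) (Fin.cons d (u ∘ Sum.inr)) :=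
      fun u d => funext fun x => by
        rcases x with x | i
        · rfl
        · exact Fin.cases rfl (fun _ => rfl) i
    refine (ih (h.comap g).exists_option).congr fun v => ?_
    simp only [Fin.exists_fin_succ_pi, hg, Sum.elim_comp_inl, Sum.elim_comp_inr]
    exact exists_comm

theorem true_of_nonempty_vars [Nonempty V] : PpDefinable S (fun _ : V → D => True) :=
  let ⟨x⟩ := ‹Nonempty V›
  (eq x x).congr fun _ => iff_of_true trivial rfl

theorem true_of_nonempty [Nonempty D] : PpDefinable S (fun _ : V → D => True) :=
  let ⟨d⟩ := ‹Nonempty D›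
  ⟨.ex (.eq none none), fun _ => iff_of_true trivial ⟨d, rfl⟩⟩

theorem forall_finset {ι : Type} (htrue : PpDefinable S (fun _ : V → D => True))
    {R : ι → (V → D) → Prop} (h : ∀ i, PpDefinable S (R i)) (s : Finset ι) :
    PpDefinable S (fun v => ∀ i ∈ s, R i v) := by
  classical
  induction s using Finset.induction_on with
  | empty => exact htrue.congr fun _ => by simp
  | insert i s _ ih => exact ((h i).and ih).congr fun _ => Finset.forall_mem_insert _ _ _

theorem forall_finite {ι : Type} [Finite ι] (htrue : PpDefinable S (fun _ : V → D => True))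
    {R : ι → (V → D) → Prop} (h : ∀ i, PpDefinable S (R i)) :
    PpDefinable S (fun v => ∀ i, R i v) :=
  have := Fintype.ofFinite ι
  (forall_finset htrue h Finset.univ).congr fun _ => by simp

end PpDefinable

end PPFormulaCalculus

section OmegaCategorical

variable {σ : Type} {ar : σ → ℕ} {D : Type} {S : RelStruct σ ar D}

def ppType (S : RelStruct σ ar D) {V : Type} (v : V → D) : Set (PPFormula σ ar V) :=
  {φ | φ.Sat S v}

theorem ppType_comp_subset {V W : Type} {v w : W → D} (h : ppType S v ⊆ ppType S w)
    (f : V → W) : ppType S (v ∘ f) ⊆ ppType S (w ∘ f) := fun φ hφ =>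
  (PPFormula.sat_rename S f φ w).1 (h ((PPFormula.sat_rename S f φ v).2 hφ))

def autOrbit (S : RelStruct σ ar D) {n : ℕ} (t : Fin n → D) : Set (Fin n → D) :=
  {u | ∃ g : D ≃ D, IsAutomorphism S g ∧ (fun i => g (t i)) = u}

theorem mem_autOrbit_self {n : ℕ} (t : Fin n → D) : t ∈ autOrbit S t :=
  ⟨Equiv.refl D, ⟨fun _ _ h => h, fun _ _ h => h⟩, rfl⟩

theorem ppType_subset_of_mem_autOrbit {n : ℕ} {t u : Fin n → D} (hu : u ∈ autOrbit S t) :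
    ppType S t ⊆ ppType S u := by
  obtain ⟨g, hg, rfl⟩ := hu
  exact fun φ hφ => hφ.map_hom hg.1

/-- Each pp-definable relation is a union of orbits, so there are only finitely many of them;
a smallest one containing `v` isolates the pp-type of `v`. -/
theorem OmegaCategorical.exists_isolating [Nonempty D] (hS : OmegaCategorical S) {n : ℕ}
    (v : Fin n → D) : ∃ φ ∈ ppType S v, ∀ u, φ.Sat S u → ppType S v ⊆ ppType S u := by
  let defSet : PPFormula σ ar (Fin n) → Set (Fin n → D) := fun φ => {u | φ.Sat S u}
  have hunion : ∀ φ, defSet φ = ⋃₀ {O | (∃ t, O = autOrbit S t) ∧ O ⊆ defSet φ} := by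
    refine fun φ => subset_antisymm (fun u hu => ⟨autOrbit S u, ⟨⟨u, rfl⟩, ?_⟩,
      mem_autOrbit_self u⟩) (Set.sUnion_subset fun O hO => hO.2)
    exact fun u' hu' => ppType_subset_of_mem_autOrbit hu' hu
  have hfin : (defSet '' ppType S v).Finite := by
    refine (((hS n).finite_subsets).image Set.sUnion).subset ?_
    rintro _ ⟨φ, -, rfl⟩
    exact ⟨_, fun O hO => hO.1, (hunion φ).symm⟩
  have hne : (defSet '' ppType S v).Nonempty :=
    ⟨_, Set.mem_image_of_mem defSet
      (show PPFormula.ex (.eq none none) ∈ ppType S v from ⟨Classical.arbitrary D, rfl⟩)⟩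
  obtain ⟨_, ⟨φ, hφv, rfl⟩, hmin⟩ := hfin.exists_minimal hne
  refine ⟨φ, hφv, fun u hu ψ hψv => ?_⟩
  have hsub : defSet (φ.and ψ) ⊆ defSet φ := fun _ h => h.1
  have hmem : φ.and ψ ∈ ppType S v := ⟨hφv, hψv⟩
  exact (hmin (Set.mem_image_of_mem defSet hmem) hsub hu).2

theorem OmegaCategorical.exists_snoc_ppType_subset [Nonempty D] (hS : OmegaCategorical S)
    {k : ℕ} {v w : Fin k → D} (h : ppType S v ⊆ ppType S w) (x : D) :
    ∃ y, ppType S (Fin.snoc v x) ⊆ ppType S (Fin.snoc w y) := by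
  obtain ⟨φ, hφ, hiso⟩ := hS.exists_isolating (Fin.snoc v x)
  have hsnoc : ∀ (u : Fin k → D) d, (fun o => Option.elim o d u) ∘
      Fin.lastCases (motive := fun _ => Option (Fin k)) none some = Fin.snoc u d :=
    fun u d => funext fun i => Fin.lastCases (by simp) (fun j => by simp) i
  let ψ : PPFormula σ ar (Fin k) := .ex (φ.rename (Fin.lastCases none some))
  have hψ : ∀ u, ψ.Sat S u ↔ ∃ d, φ.Sat S (Fin.snoc u d) := fun u =>
    exists_congr fun d => by rw [PPFormula.sat_rename, hsnoc]
  obtain ⟨y, hy⟩ := (hψ w).1 (h (show ψ ∈ ppType S v from (hψ v).2 ⟨x, hφ⟩))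
  exact ⟨y, hiso _ hy⟩

theorem fun_fin_succ_eq_snoc (g : ℕ → D) (k : ℕ) :
    (fun i : Fin (k + 1) => g i) = Fin.snoc (fun i : Fin k => g i) (g k) :=
  funext fun i => Fin.lastCases (by simp) (fun j => by simp) i

theorem OmegaCategorical.exists_seq_ppType_subset [Nonempty D] (hS : OmegaCategorical S)
    (src : ℕ → D) {m : ℕ} (w : Fin m → D)
    (h : ppType S (fun i : Fin m => src i) ⊆ ppType S w) :
    ∃ f : ℕ → D, (∀ i : Fin m, f i = w i) ∧
      ∀ (k : ℕ) (p : Fin k → ℕ), ppType S (src ∘ p) ⊆ ppType S (f ∘ p) := by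
  choose! next hnext using fun k (v u : Fin k → D) (x : D) (h : ppType S v ⊆ ppType S u) =>
    hS.exists_snoc_ppType_subset h x
  let f : ℕ → D := Nat.strongRec fun n g =>
    if hn : n < m then w ⟨n, hn⟩ else next n (fun i : Fin n => src i) (fun i => g i i.2) (src n)
  have hf : ∀ n, f n = if hn : n < m then w ⟨n, hn⟩
      else next n (fun i : Fin n => src i) (fun i => f i) (src n) :=
    fun n => Nat.strongRec_eq _ n
  have hfw : ∀ i : Fin m, f i = w i := fun i => by rw [hf, dif_pos i.2]
  have hprefix : ∀ k, m ≤ k →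
      ppType S (fun i : Fin k => src i) ⊆ ppType S (fun i : Fin k => f i) := by
    refine Nat.le_induction ?_ fun k hk ih => ?_
    · rwa [show (fun i : Fin m => f i) = w from funext hfw]
    · rw [fun_fin_succ_eq_snoc src, fun_fin_succ_eq_snoc f, hf k, dif_neg (not_lt.2 hk)]
      exact hnext k _ _ (src k) ih
  refine ⟨f, hfw, fun k p => ?_⟩
  have hK : ∀ j, p j < m + Finset.univ.sup p + 1 := fun j => by
    have := Finset.le_sup (f := p) (Finset.mem_univ j); omega
  exact ppType_comp_subset (hprefix _ (by omega)) fun j => ⟨p j, hK j⟩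

end OmegaCategorical

section Endomorphisms

variable {σ : Type} {ar : σ → ℕ} {D : Type} {S : RelStruct σ ar D}

theorem exists_isHomOf_of_ppType_subset {src f : ℕ → D} (hsrc : Function.Surjective src)
    (h : ∀ (k : ℕ) (p : Fin k → ℕ), ppType S (src ∘ p) ⊆ ppType S (f ∘ p)) :
    ∃ e : D → D, IsHomOf S S e ∧ ∀ n, e (src n) = f n := by
  choose idx hidx using hsrc
  refine ⟨f ∘ idx, fun s t ht => ?_, fun n => ?_⟩
  · have hrel : (PPFormula.rel s id : PPFormula σ ar _) ∈ ppType S (src ∘ idx ∘ t) :=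
      show S.rel s (fun i => src (idx (t i))) by simpa only [hidx] using ht
    exact h _ (idx ∘ t) hrel
  · have heq : (PPFormula.eq 0 1 : PPFormula σ ar _) ∈ ppType S (src ∘ ![idx (src n), n]) :=
      hidx (src n)
    exact h 2 _ heq

theorem OmegaCategorical.exists_isHomOf [Countable D] [Nonempty D] (hS : OmegaCategorical S)
    {m : ℕ} {v w : Fin m → D} (h : ppType S v ⊆ ppType S w) :
    ∃ e : D → D, IsHomOf S S e ∧ ∀ i, e (v i) = w i := by
  obtain ⟨c, hc⟩ := exists_surjective_nat D
  let src : ℕ → D := fun n => if hn : n < m then v ⟨n, hn⟩ else c (n - m)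
  have hsrc : Function.Surjective src := fun x => by
    obtain ⟨j, rfl⟩ := hc x
    exact ⟨m + j, by simp [src]⟩
  have hv : (fun i : Fin m => src i) = v := funext fun i => dif_pos i.2
  obtain ⟨f, hfw, hf⟩ := hS.exists_seq_ppType_subset src w (hv ▸ h)
  obtain ⟨e, he, hef⟩ := exists_isHomOf_of_ppType_subset hsrc hf
  exact ⟨e, he, fun i => by rw [← hfw, ← hef, ← congrFun hv i]⟩

theorem ModelCompleteCore.ppDefinable_autOrbit [Countable D] [Nonempty D]
    (hmc : ModelCompleteCore S) (hS : OmegaCategorical S) {n : ℕ} (t : Fin n → D) :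
    PpDefinable S (· ∈ autOrbit S t) := by
  obtain ⟨φ, hφt, hiso⟩ := hS.exists_isolating t
  refine ⟨φ, fun u => ⟨fun hu => ppType_subset_of_mem_autOrbit hu hφt, fun hu => ?_⟩⟩
  obtain ⟨e, he, het⟩ := hS.exists_isHomOf (hiso u hu)
  obtain ⟨g, hg, hge⟩ := hmc e he (Set.range t) (Set.finite_range t)
  exact ⟨g, hg, funext fun i => (hge _ ⟨i, rfl⟩).trans (het i)⟩

end Endomorphisms

section PpPowers

variable {σ τ υ : Type} {ar : σ → ℕ} {br : τ → ℕ} {cr : υ → ℕ} {D E F : Type}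

theorem IsHomOf.comp {SA : RelStruct σ ar D} {SB : RelStruct σ ar E}
    {SC : RelStruct σ ar F} {h : D → E} {h' : E → F} (h₂ : IsHomOf SB SC h')
    (h₁ : IsHomOf SA SB h) :
    IsHomOf SA SC (h' ∘ h) :=
  fun s t ht => h₂ s _ (h₁ s t ht)

theorem HomEquiv.refl (S : RelStruct σ ar D) : HomEquiv S S :=
  ⟨⟨id, fun _ _ h => h⟩, ⟨id, fun _ _ h => h⟩⟩

theorem HomEquiv.trans {SA : RelStruct σ ar D} {SB : RelStruct σ ar E} {SC : RelStruct σ ar F}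
    (h₁ : HomEquiv SA SB) (h₂ : HomEquiv SB SC) : HomEquiv SA SC :=
  let ⟨⟨_, hf₁⟩, ⟨_, hg₁⟩⟩ := h₁
  let ⟨⟨_, hf₂⟩, ⟨_, hg₂⟩⟩ := h₂
  ⟨⟨_, hf₂.comp hf₁⟩, ⟨_, hg₁.comp hg₂⟩⟩

theorem IsPpPower.of_pi {SA : RelStruct σ ar D} {n : ℕ} (hn : 0 < n)
    {T : RelStruct τ br (Fin n → D)}
    (h : ∀ s, PpDefinable SA fun v : Fin (br s) × Fin n → D => T.rel s fun j i => v (j, i)) :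
    IsPpPower SA T :=
  ⟨n, hn, Equiv.refl _, h⟩

theorem IsPpPower.of_ppDefinable {SA : RelStruct σ ar D} {T : RelStruct τ br D}
    (h : ∀ s, PpDefinable SA (T.rel s)) : IsPpPower SA T :=
  ⟨1, one_pos, (Equiv.funUnique (Fin 1) D).symm, fun s => (h s).comap fun j => (j, 0)⟩

theorem PpDefinable.pullback {SA : RelStruct σ ar D} {SB : RelStruct τ br E} {n : ℕ}
    (hn : 0 < n) (e : E ≃ (Fin n → D))
    (hB : ∀ s, PpDefinable SA (fun v : Fin (br s) × Fin n → D =>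
      SB.rel s (fun j => e.symm (fun i => v (j, i)))))
    {V : Type} {R : (V → E) → Prop} (hR : PpDefinable SB R) :
    PpDefinable SA (fun v : V × Fin n → D => R (fun x => e.symm (fun i => v (x, i)))) := by
  obtain ⟨φ, hφ⟩ := hR
  refine PpDefinable.congr ?_ fun v => hφ _
  clear hφ R
  induction φ with
  | rel s t => exact (hB s).comap fun p => (t p.1, p.2)
  | @eq V x y =>
    have : Nonempty (V × Fin n) := ⟨(x, ⟨0, hn⟩)⟩
    refine (PpDefinable.forall_finite PpDefinable.true_of_nonempty_vars
      fun i => PpDefinable.eq (x, i) (y, i)).congr fun v => ?_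
    exact e.symm.injective.eq_iff.trans funext_iff
  | and φ ψ ihφ ihψ => exact ihφ.and ihψ
  | @ex V φ ih =>
    let g : Option V × Fin n → (V × Fin n) ⊕ Fin n := fun p =>
      p.1.elim (Sum.inr p.2) fun x => Sum.inl (x, p.2)
    refine (PpDefinable.exists_fin n (ih.comap g)).congr fun v => ?_
    refine Iff.trans (show (∃ c, _) ↔ _ from e.exists_congr_left)
      (exists_congr fun w => iff_of_eq ?_)
    congr 1
    funext o
    cases o <;> rfl

theorem IsPpPower.trans {SA : RelStruct σ ar D} {SB : RelStruct τ br E}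
    {SC : RelStruct υ cr F} (h₁ : IsPpPower SA SB) (h₂ : IsPpPower SB SC) :
    IsPpPower SA SC := by
  obtain ⟨n, hn, e₁, hB⟩ := h₁
  obtain ⟨m, hm, e₂, hC⟩ := h₂
  let e : F ≃ (Fin (m * n) → D) := e₂.trans <| (Equiv.piCongrRight fun _ => e₁).trans <|
    (Equiv.curry _ _ _).symm.trans (Equiv.arrowCongr finProdFinEquiv (Equiv.refl D))
  refine ⟨m * n, Nat.mul_pos hm hn, e, fun s => ?_⟩
  refine ((PpDefinable.pullback hn e₁ hB (hC s)).comap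
    fun p => (p.1.1, finProdFinEquiv (p.1.2, p.2))).congr fun v => ?_
  rfl

theorem HomEquiv.homEqPpPower_of_isPpPower {SB : RelStruct τ br E} {P : RelStruct τ br D}
    {SC : RelStruct υ cr F} (hBP : HomEquiv SB P) (hC : IsPpPower SB SC) :
    HomEqPpPower P SC := by
  obtain ⟨⟨f, hf⟩, ⟨g, hg⟩⟩ := hBP
  obtain ⟨m, hm, e, hC⟩ := hC
  choose ψ hψ using hC
  refine ⟨_, ⟨fun s (t : Fin (cr s) → Fin m → D) => (ψ s).Sat P fun p => t p.1 p.2⟩,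
    IsPpPower.of_pi hm fun s => ⟨ψ s, fun _ => Iff.rfl⟩, ⟨⟨fun x i => f (e x i), ?_⟩,
    ⟨fun t => e.symm (g ∘ t), fun s t ht => (hψ s _).2 (ht.map_hom hg)⟩⟩⟩
  intro s u hu
  refine ((hψ s fun p => e (u p.1) p.2).1 ?_).map_hom hf
  simpa only [Equiv.symm_apply_apply] using hu

theorem HomEqPpPower.refl (S : RelStruct σ ar D) : HomEqPpPower S S :=
  ⟨D, S, IsPpPower.of_ppDefinable fun s => (PpDefinable.rel s id).congr fun _ => Iff.rfl,
    HomEquiv.refl S⟩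

theorem HomEqPpPower.trans {SA : RelStruct σ ar D} {SB : RelStruct τ br E}
    {SC : RelStruct υ cr F} (h₁ : HomEqPpPower SA SB) (h₂ : HomEqPpPower SB SC) :
    HomEqPpPower SA SC := by
  obtain ⟨_, P, hP, hBP⟩ := h₁
  obtain ⟨_, Q, hQ, hCQ⟩ := h₂
  obtain ⟨_, Q', hQ', hQQ'⟩ := hBP.homEqPpPower_of_isPpPower hQ
  exact ⟨_, Q', hP.trans hQ', hCQ.trans hQQ'⟩

theorem PpInterprets.homEqPpPower {SA : RelStruct σ ar D} {SB : RelStruct τ br E}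
    (h : PpInterprets SA SB) : HomEqPpPower SA SB := by
  obtain ⟨n, hn, Dom, h, hsurj, -, -, hRel⟩ := h
  choose sec hsecDom hsec using hsurj
  refine ⟨_, ⟨fun s v => (∀ j, v j ∈ Dom) ∧ SB.rel s (h ∘ v)⟩, .of_pi hn hRel,
    ⟨sec, fun s t ht => ⟨fun j => hsecDom (t j), ?_⟩⟩, ⟨h, fun _ _ ht => ht.2⟩⟩
  simpa only [Function.comp_def, hsec] using ht

theorem IsPpPower.ppInterprets {SA : RelStruct σ ar D} {SB : RelStruct τ br E}
    (h : IsPpPower SA SB) : PpInterprets SA SB := by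
  obtain ⟨n, hn, e, hB⟩ := h
  have : Nonempty (Fin n) := ⟨⟨0, hn⟩⟩
  refine ⟨n, hn, Set.univ, e.symm, fun b => ⟨e b, trivial, e.symm_apply_apply b⟩,
    PpDefinable.true_of_nonempty_vars, ?_,
    fun s => (hB s).congr fun _ => and_iff_right fun _ => trivial⟩
  refine (PpDefinable.forall_finite PpDefinable.true_of_nonempty_vars
    fun i => PpDefinable.eq (0, i) (1, i)).congr fun v => ?_
  simp only [Set.mem_univ, true_and, e.symm.injective.eq_iff, funext_iff]

end PpPowers

theorem RelStruct.rel_comp_cast_iff {τ : Type} {br : τ → ℕ} {E : Type}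
    (S : RelStruct τ br E) {s s' : τ} (h : s = s') (t : Fin (br s') → E) :
    S.rel s (t ∘ Fin.cast (congrArg br h)) ↔ S.rel s' t := by
  subst h
  rfl

theorem HomEquiv.homEquivB {ι : Type} {ar : ι → ℕ} {D E : Type} {S : RelStruct ι ar D}
    {T : RelStruct ι ar E} (h : HomEquiv S T) :
    BStr.HomEquivB ⟨ι, ar, D, S⟩ ⟨ι, ar, E, T⟩ :=
  let ⟨⟨f, hf⟩, ⟨g, hg⟩⟩ := h
  ⟨Equiv.refl ι, fun _ => rfl, fun _ => rfl, ⟨f, hf⟩, ⟨g, hg⟩⟩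

namespace BStr

theorem HomEquivB.homEqPpPower {A B : BStr} (h : HomEquivB A B) :
    HomEqPpPower A.str B.str := by
  obtain ⟨e, har, har', ⟨f, hf⟩, ⟨g, hg⟩⟩ := h
  refine ⟨A.D, ⟨fun s t => A.str.rel (e.symm s) (t ∘ Fin.cast (har' s))⟩,
    IsPpPower.of_ppDefinable fun s => PpDefinable.rel _ _, ⟨g, hg⟩, ⟨f, fun s t ht => ?_⟩⟩
  exact (B.str.rel_comp_cast_iff (e.apply_symm_apply s) _).1 (hf _ _ ht)

theorem homEquivB_of_iso {A B : BStr} (e : A.ι ≃ B.ι) (har : ∀ s, B.ar (e s) = A.ar s)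
    (d : A.D ≃ B.D)
    (hrel : ∀ s t, B.str.rel (e s) t ↔
      A.str.rel s fun i => d.symm (t (Fin.cast (har s).symm i))) :
    HomEquivB A B := by
  refine ⟨e, har, fun s => (har (e.symm s)).symm.trans (congrArg B.ar (e.apply_symm_apply s)),
    ⟨d, fun s t ht => (hrel s _).2 (by simpa using ht)⟩, ⟨d.symm, fun s t ht => ?_⟩⟩
  exact (hrel _ _).1 ((B.str.rel_comp_cast_iff (e.apply_symm_apply s) t).2 ht)

def withConst (A : BStr) (a : A.D) : BStr where
  ι := Option A.ι
  ar o := o.elim 1 A.ar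
  D := A.D
  str := ⟨fun o => match o with
    | none => fun t => ∀ i, t i = a
    | some s => A.str.rel s⟩

theorem AddSingletonB.exists_homEquivB_withConst {A B : BStr} (h : AddSingletonB A B) :
    ∃ a, HomEquivB (A.withConst a) B := by
  obtain ⟨e, d, hars, har1, hold, s₀, hnew⟩ := h
  refine ⟨d.symm s₀, homEquivB_of_iso e
    (fun o => match o with | none => har1 | some s => hars s) d fun o t => ?_⟩
  cases o with
  | none =>
    exact (hnew t).trans ⟨fun ht i => congrArg d.symm (ht _),
      fun ht j => d.symm.injective (ht (Fin.cast har1 j))⟩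
  | some s => exact hold s t

end BStr

/-- The constant `a` is simulated on pairs: old relations act on first coordinates with a common
second coordinate `y`, the constant becomes the diagonal over the orbit of `a`, and the pair
`(x, y)` is mapped back by an automorphism sending `y` to `a` when `y` lies in that orbit. -/
theorem ModelCompleteCore.homEqPpPower_withConst {A : BStr} [Countable A.D]
    (hmc : ModelCompleteCore A.str) (hA : OmegaCategorical A.str) (a : A.D) :
    HomEqPpPower A.str (A.withConst a).str := by
  have : Nonempty A.D := ⟨a⟩
  let O := autOrbit A.str fun _ : Fin 1 => a
  have hO : PpDefinable A.str (· ∈ O) := hmc.ppDefinable_autOrbit hA _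
  have hα : ∀ y, ∃ g : A.D ≃ A.D,
      IsAutomorphism A.str g ∧ ((fun _ : Fin 1 => y) ∈ O → g y = a) := by
    intro y
    by_cases hy : (fun _ : Fin 1 => y) ∈ O
    · obtain ⟨g, hg, hgy⟩ := hy
      exact ⟨g.symm, ⟨hg.2, hg.1⟩, fun _ => g.symm_apply_eq.2 (congrFun hgy 0).symm⟩
    · exact ⟨Equiv.refl _, ⟨fun _ _ h => h, fun _ _ h => h⟩, fun h => absurd h hy⟩
  choose α hαaut hαa using hα
  let T : RelStruct (A.withConst a).ι (A.withConst a).ar (Fin 2 → A.D) :=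
    ⟨fun o => match o with
    | none => fun t => ∀ i, t i 0 = t i 1 ∧ (fun _ => t i 0) ∈ O
    | some s => fun t => ∃ y, (∀ i, t i 1 = y) ∧ A.str.rel s fun i => t i 0⟩
  refine ⟨_, T, IsPpPower.of_pi two_pos fun o => ?_, ⟨fun x => ![x, a], fun o t ht => ?_⟩,
    ⟨fun t => α (t 1) (t 0), fun o t ht => ?_⟩⟩
  · cases o with
    | none =>
      exact PpDefinable.forall_finite PpDefinable.true_of_nonempty
        fun i => (PpDefinable.eq (i, 0) (i, 1)).and (hO.comap fun _ => (i, 0))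
    | some s =>
      exact PpDefinable.exists_option ((PpDefinable.forall_finite
        PpDefinable.true_of_nonempty fun i => PpDefinable.eq (some (i, 1)) none).and
          (PpDefinable.rel s fun i => some (i, 0)))
  · cases o with
    | none =>
      refine fun i => ⟨ht i, ?_⟩
      simpa only [Matrix.cons_val_zero, ht i] using mem_autOrbit_self _
    | some s => exact ⟨a, fun _ => rfl, ht⟩
  · cases o with
    | none =>
      intro i
      show α (t i 1) (t i 0) = a
      rw [← (ht i).1]
      exact hαa _ (ht i).2
    | some s =>
      obtain ⟨y, hy, hrel⟩ := ht
      have hαt : (fun i => α (t i 1) (t i 0)) = fun i => α y (t i 0) :=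
        funext fun i => by rw [hy]
      exact hαt ▸ (hαaut y).1 s _ hrel

namespace BStr

theorem PpStep.homEqPpPower {A B : BStr} (h : PpStep A B) : HomEqPpPower A.str B.str := by
  rcases h with h | h | ⟨_, hA, hmc, hadd⟩
  · exact h.homEqPpPower
  · exact h.homEqPpPower
  · obtain ⟨a, ha⟩ := hadd.exists_homEquivB_withConst
    exact (hmc.homEqPpPower_withConst hA a).trans ha.homEqPpPower

theorem homEqPpPower_of_ppStep_chain :
    ∀ {k : ℕ} (Cs : Fin (k + 1) → BStr),
      (∀ i : Fin k, PpStep (Cs i.castSucc) (Cs i.succ)) →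
        HomEqPpPower (Cs 0).str (Cs (Fin.last k)).str
  | 0, _, _ => HomEqPpPower.refl _
  | k + 1, Cs, h =>
    (homEqPpPower_of_ppStep_chain (Fin.init Cs) fun i => h i.castSucc).trans
      (h (Fin.last k)).homEqPpPower

theorem PpConstructible.homEqPpPower {A B : BStr} (h : PpConstructible A B) :
    HomEqPpPower A.str B.str := by
  obtain ⟨k, Cs, rfl, rfl, h⟩ := h
  exact homEqPpPower_of_ppStep_chain Cs h

end BStr

theorem HomEqPpPower.ppConstructible {A B : BStr} (h : HomEqPpPower A.str B.str) :
    BStr.PpConstructible A B := by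
  obtain ⟨C, SC, hpow, hBC, hCB⟩ := h
  exact ⟨2, ![A, ⟨B.ι, B.ar, C, SC⟩, B], rfl, rfl, Fin.forall_fin_two.2
    ⟨Or.inl hpow.ppInterprets, Or.inr (Or.inl (HomEquiv.homEquivB ⟨hCB, hBC⟩))⟩⟩

theorem stmt8_general (A B : BStr) :
    BStr.PpConstructible A B ↔ HomEqPpPower A.str B.str :=
  ⟨BStr.PpConstructible.homEqPpPower, HomEqPpPower.ppConstructible⟩

/-- Corollary 3.7 of the paper. Let `A`, `B` be at most countable
ω-categorical relational structures. Then `B` can be pp-constructed from `A` iff `B`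
is homomorphically equivalent to a pp-power of `A`. -/
theorem stmt8 (A B : BStr) (hcA : Countable A.D) (hcB : Countable B.D)
    (hA : OmegaCategorical A.str) (hB : OmegaCategorical B.str) :
    BStr.PpConstructible A B ↔ HomEqPpPower A.str B.str :=
  stmt8_general A B
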